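/- Let (G̃, G) be a ℤ/2-pair with wall structure W = { π^{−1}(e) : e ∈ E(G) } on G̃. Then for all vertices x, y of G̃: d_W(x,y) < girth(G) if and only if d_{G̃}(x,y) < girth(G); and moreover, if these inequalities hold then d_W(x,y) = d_{G̃}(x,y). -/

import Mathlib

/-- A multigraph: a set of vertices `V`, a set of edges `E`, and two endpoint maps.
The pair `(src e, tgt e)` records an (arbitrary) orientation of the unoriented edge `e`;
graphs are regarded as unoriented. -/
structure Multigraph (V E : Type) where
  src : E → V
  tgt : E → V

namespace Multigraph

variable {V E : Type}

/-- The edge `e` is an edge between `u` and `v` (in either direction). -/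
def EndsAt (G : Multigraph V E) (e : E) (u v : V) : Prop :=
  (G.src e = u ∧ G.tgt e = v) ∨ (G.src e = v ∧ G.tgt e = u)

/-- A path (walk) in a multigraph from `u` to `v`: a sequence
`(v₀, e₁, v₁, …, e_n, v_n)` where each `e_i` is an edge between `v_{i-1}` and `v_i`. -/
inductive Walk (G : Multigraph V E) : V → V → Type
  | nil (v : V) : Walk G v v
  | cons {u v w : V} (e : E) (h : G.EndsAt e u v) (p : Walk G v w) : Walk G u w

namespace Walk

variable {G : Multigraph V E}

/-- The length of a path. -/
def length : ∀ {u v : V}, G.Walk u v → ℕ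
  | _, _, .nil _ => 0
  | _, _, .cons _ _ p => length p + 1

/-- The list of edges of a path. -/
def edges : ∀ {u v : V}, G.Walk u v → List E
  | _, _, .nil _ => []
  | _, _, .cons e _ p => e :: edges p

/-- The list of vertices of a path (including the first one). -/
def verts : ∀ {u v : V}, G.Walk u v → List V
  | _, _, .nil v => [v]
  | u, _, .cons _ _ p => u :: verts p

/-- A path has a backtrack if for some `i` it traverses the same edge at steps
`i+1` and `i+2` returning to the same vertex, i.e. `v_i = v_{i+2}` and `e_{i+1} = e_{i+2}`. -/
def HasBacktrack {u v : V} (p : G.Walk u v) : Prop :=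
  ∃ i : ℕ, i + 1 < p.edges.length ∧ p.edges[i]? = p.edges[i + 1]? ∧
    p.verts[i]? = p.verts[i + 2]?

end Walk

/-- A multigraph is connected if any two vertices are joined by a path. -/
def Connected (G : Multigraph V E) : Prop := ∀ u v : V, Nonempty (G.Walk u v)

/-- `u` and `v` can be joined by a path avoiding all edges in `F`. -/
def ReachAvoid (G : Multigraph V E) (F : Set E) (u v : V) : Prop :=
  ∃ p : G.Walk u v, ∀ e ∈ p.edges, e ∉ F

/-- A set of edges `w` is a wall (a cut) if removing these edges from the graph separates
it into exactly two connected components (the associated half-spaces `A` and `B`). -/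
def IsWall (G : Multigraph V E) (w : Set E) : Prop :=
  ∃ A B : Set V, A.Nonempty ∧ B.Nonempty ∧ Disjoint A B ∧ A ∪ B = Set.univ ∧
    ∀ u v : V, G.ReachAvoid w u v ↔ ((u ∈ A ∧ v ∈ A) ∨ (u ∈ B ∧ v ∈ B))

/-- A wall structure: a set of walls such that every edge belongs to exactly one wall. -/
def IsWallStructure (G : Multigraph V E) (W : Set (Set E)) : Prop :=
  (∀ w ∈ W, G.IsWall w) ∧ ∀ e : E, ∃! w, w ∈ W ∧ e ∈ w

/-- The set of edges `w` separates `u` from `v` if after removing `w` there is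
no path from `u` to `v` (i.e. they lie in different half-spaces). -/
def Separates (G : Multigraph V E) (w : Set E) (u v : V) : Prop :=
  ¬ G.ReachAvoid w u v

/-- The wall pseudometric associated with a wall structure `W`:
the number of walls of `W` separating `x` from `y`. -/
noncomputable def wallDistOf (G : Multigraph V E) (W : Set (Set E)) (x y : V) : ℕ :=
  {w : Set E | w ∈ W ∧ G.Separates w x y}.ncard

/-- The graph metric: the length of a shortest path between two vertices. -/
noncomputable def graphDist (G : Multigraph V E) (u v : V) : ℕ :=
  sInf {n : ℕ | ∃ p : G.Walk u v, p.length = n}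

/-- A simple loop: a closed path of positive length with no repeated edges and no
repeated vertices (except that the first and last vertex coincide). -/
def IsSimpleLoop (G : Multigraph V E) {v : V} (p : G.Walk v v) : Prop :=
  0 < p.length ∧ p.edges.Nodup ∧ p.verts.dropLast.Nodup

/-- The girth of a multigraph: the length of a shortest simple loop. -/
noncomputable def girth (G : Multigraph V E) : ℕ :=
  sInf {n : ℕ | ∃ (v : V) (p : G.Walk v v), G.IsSimpleLoop p ∧ p.length = n}

end Multigraph

namespace Multigraph

variable {V E : Type}

/-- A graph is 2-connected if removing any single edge does not disconnect it
(equivalently, every edge lies on a simple loop). -/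
def TwoConnected (G : Multigraph V E) : Prop :=
  G.Connected ∧ ∀ (e : E) (u v : V), G.ReachAvoid {e} u v

/-- `T` is (the edge set of) a spanning tree of the finite graph `G`: the edges of `T`
connect all vertices of `G` and `|T| = |V(G)| - 1` (so the subgraph on `T` is a tree). -/
def IsSpanningTree [Fintype V] (G : Multigraph V E) (T : Finset E) : Prop :=
  (∀ u v : V, ∃ p : G.Walk u v, ∀ e ∈ p.edges, e ∈ T) ∧ T.card + 1 = Fintype.card V

variable [Fintype E] [DecidableEq E]

/-- Given a spanning tree `T` with `S = E \ T = Tᶜ`, crossing the edge `e` changes the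
second coordinate `τ ⊆ S` of a vertex of the `ℤ/2`-homology cover to `τ △ {e}` if `e ∈ S`,
and leaves it unchanged if `e ∈ T`. -/
def tauStep (T : Finset E) (e : E) (τ : {τ : Finset E // τ ⊆ Tᶜ}) :
    {τ : Finset E // τ ⊆ Tᶜ} :=
  if he : e ∈ Tᶜ then
    ⟨symmDiff τ.1 {e}, fun x hx => by
      rcases Finset.mem_symmDiff.mp hx with ⟨h1, _⟩ | ⟨h1, _⟩
      · exact τ.2 h1
      · rwa [Finset.mem_singleton.mp h1]⟩
  else τ

/-- The `ℤ/2`-homology cover of `G` associated with the spanning tree `T` (with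
`S = Tᶜ`): vertices are `V × 𝒫(S)`, edges are `E × 𝒫(S)`, where the edge `(e, τ)`
joins `(x, τ)` to `(y, τ)` if `e ∉ S`, and `(x, τ)` to `(y, τ △ {e})` if `e ∈ S`
with the orientation `x → y`. -/
def cover (G : Multigraph V E) (T : Finset E) :
    Multigraph (V × {τ : Finset E // τ ⊆ Tᶜ}) (E × {τ : Finset E // τ ⊆ Tᶜ}) where
  src p := (G.src p.1, p.2)
  tgt p := (G.tgt p.1, tauStep T p.1 p.2)

/-- The covering projection maps paths in the cover to paths in the base graph,
forgetting the second coordinates. -/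
def projWalk {G : Multigraph V E} {T : Finset E} :
    ∀ {x y : V × {τ : Finset E // τ ⊆ Tᶜ}}, (cover G T).Walk x y → G.Walk x.1 y.1
  | _, _, .nil v => .nil v.1
  | _, _, .cons e h p =>
      .cons e.1
        (by
          rcases h with ⟨h1, h2⟩ | ⟨h1, h2⟩
          · exact Or.inl ⟨congrArg Prod.fst h1, congrArg Prod.fst h2⟩
          · exact Or.inr ⟨congrArg Prod.fst h1, congrArg Prod.fst h2⟩)
        (projWalk p)

/-- A path `p` in `G` from `x₀` to `y₀` is `(x,y)`-admissible (for vertices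
`x = (x₀, τ_x)`, `y = (y₀, τ_y)` of the cover) if for every `e ∈ S = Tᶜ`, the number
of occurrences of `e` among the edges of `p` is odd when `e ∈ τ_x △ τ_y` and even
otherwise. -/
def Admissible (G : Multigraph V E) (T : Finset E)
    (x y : V × {τ : Finset E // τ ⊆ Tᶜ}) (p : G.Walk x.1 y.1) : Prop :=
  ∀ e ∈ (Tᶜ : Finset E),
    p.edges.count e % 2 = if e ∈ symmDiff x.2.1 y.2.1 then 1 else 0

/-- The wall `w_e = π⁻¹(e)` of the `ℤ/2`-homology cover associated to an edge `e` of
the base graph. -/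
def wallOf (G : Multigraph V E) (T : Finset E) (e : E) :
    Set (E × {τ : Finset E // τ ⊆ Tᶜ}) := {f | f.1 = e}

/-- The wall metric on the `ℤ/2`-homology cover: the number of walls
`w_e = π⁻¹(e)`, `e ∈ E(G)`, separating `x` from `y`. -/
noncomputable def wallDist (G : Multigraph V E) (T : Finset E)
    (x y : V × {τ : Finset E // τ ⊆ Tᶜ}) : ℕ :=
  {e : E | (cover G T).Separates (wallOf G T e) x y}.ncard

end Multigraph

/-!
A walk of the cover from `x` to `y` projects to a walk `p` of `G` from `x.1` to `y.1` that is
admissible: the non-tree edges it traverses an odd number of times are exactly `x.2 ∆ y.2`;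
conversely every admissible walk lifts, with the same length and edges. Hence `d_G̃(x, y)` is the
least length of an admissible walk, and the wall of `e` separates `x` from `y` iff every
admissible walk uses `e`.

Two admissible walks differ, mod 2, by a cycle (an edge set with zero `ℤ/2`-boundary) inside the
spanning tree, hence by nothing: they all traverse the same set `D` of edges an odd number of
times. So `D ⊆ {walls separating x and y} ⊆ edges of a shortest admissible walk`, giving
`d_W ≤ d_G̃`. Conversely `D` has boundary `{x.1, y.1}`, and when `|D| ≤ d_W < girth G` it is
the edge set of a trail, since the rest of `D` would be a cycle shorter than the girth; that
trail is admissible, of length `|D| ≤ d_W`.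
-/

open scoped symmDiff

theorem Finset.inter_symmDiff_distrib_left {α : Type} [DecidableEq α] (s t u : Finset α) :
    s ∩ t ∆ u = (s ∩ t) ∆ (s ∩ u) :=
  inf_symmDiff_distrib_left s t u

namespace Multigraph

variable {V E : Type} {G : Multigraph V E}

theorem EndsAt.symm {e : E} {u v : V} (h : G.EndsAt e u v) : G.EndsAt e v u :=
  h.elim Or.inr Or.inl

theorem endsAt_src_tgt (e : E) : G.EndsAt e (G.src e) (G.tgt e) :=
  Or.inl ⟨rfl, rfl⟩

namespace Walk

def append : ∀ {u v w : V}, G.Walk u v → G.Walk v w → G.Walk u w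
  | _, _, _, nil _, q => q
  | _, _, _, cons e h p, q => cons e h (p.append q)

@[simp] theorem edges_append : ∀ {u v w : V} (p : G.Walk u v) (q : G.Walk v w),
    (p.append q).edges = p.edges ++ q.edges
  | _, _, _, nil _, _ => rfl
  | _, _, _, cons e _ p, q => congrArg (e :: ·) (edges_append p q)

@[simp] theorem length_edges : ∀ {u v : V} (p : G.Walk u v), p.edges.length = p.length
  | _, _, nil _ => rfl
  | _, _, cons _ _ p => by simp [edges, length, length_edges p]

theorem start_mem_verts : ∀ {u v : V} (p : G.Walk u v), u ∈ p.verts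
  | _, _, nil _ => List.mem_singleton_self _
  | _, _, cons _ _ _ => List.mem_cons_self

theorem exists_verts_eq_append : ∀ {u v : V} (p : G.Walk u v), ∃ l, p.verts = l ++ [v]
  | _, _, nil _ => ⟨[], rfl⟩
  | u, _, cons _ _ p => by
    obtain ⟨l, hl⟩ := exists_verts_eq_append p
    exact ⟨u :: l, by simp [verts, hl]⟩

theorem endpoints_mem_verts_of_mem_edges : ∀ {u v : V} (p : G.Walk u v) {e : E},
    e ∈ p.edges → G.src e ∈ p.verts ∧ G.tgt e ∈ p.verts
  | _, _, cons f h p, e, he => by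
    rcases List.mem_cons.mp he with rfl | he
    · rcases h with ⟨h1, h2⟩ | ⟨h1, h2⟩ <;>
        simp [verts, h1, h2, start_mem_verts p]
    · have := endpoints_mem_verts_of_mem_edges p he
      exact ⟨List.mem_cons_of_mem _ this.1, List.mem_cons_of_mem _ this.2⟩

theorem edges_nodup_of_verts_nodup : ∀ {u v : V} (p : G.Walk u v),
    p.verts.Nodup → p.edges.Nodup
  | _, _, nil _, _ => List.nodup_nil
  | _, _, cons e h p, hp => by
    rw [verts, List.nodup_cons] at hp
    refine List.nodup_cons.mpr ⟨fun he => hp.1 ?_, edges_nodup_of_verts_nodup p hp.2⟩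
    have := endpoints_mem_verts_of_mem_edges p he
    rcases h with ⟨h1, _⟩ | ⟨_, h2⟩
    · exact h1 ▸ this.1
    · exact h2 ▸ this.2

theorem exists_walk_of_mem_verts [DecidableEq V] : ∀ {a b : V} (p : G.Walk a b) {u : V},
    u ∈ p.verts → ∃ q : G.Walk u b, q.verts <:+ p.verts ∧ q.edges ⊆ p.edges
  | _, _, nil _, _, hu => by
    obtain rfl := List.mem_singleton.mp hu
    exact ⟨nil _, List.suffix_refl _, List.Subset.refl _⟩
  | a, _, cons e h p, u, hu => by
    by_cases hua : u = a
    · subst hua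
      exact ⟨cons e h p, List.suffix_refl _, List.Subset.refl _⟩
    · obtain ⟨q, hq, hqe⟩ :=
        exists_walk_of_mem_verts p ((List.mem_cons.mp hu).resolve_left hua)
      exact ⟨q, hq.trans (List.suffix_cons _ _),
        List.Subset.trans hqe (List.subset_cons_self _ _)⟩

theorem exists_verts_nodup [DecidableEq V] : ∀ {u v : V} (p : G.Walk u v),
    ∃ q : G.Walk u v, q.verts.Nodup ∧ q.edges ⊆ p.edges
  | _, _, nil v => ⟨nil v, List.nodup_singleton v, List.Subset.refl _⟩
  | u, _, cons e h p => by
    obtain ⟨q, hq, hqe⟩ := exists_verts_nodup p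
    by_cases hu : u ∈ q.verts
    · obtain ⟨r, hr, hre⟩ := exists_walk_of_mem_verts q hu
      exact ⟨r, hr.sublist.nodup hq,
        List.Subset.trans hre (List.Subset.trans hqe (List.subset_cons_self _ _))⟩
    · exact ⟨cons e h q, List.nodup_cons.mpr ⟨hu, hq⟩, List.cons_subset_cons _ hqe⟩

variable [DecidableEq E]

def oddEdges {u v : V} (p : G.Walk u v) : Finset E :=
  p.edges.toFinset.filter fun e => Odd (p.edges.count e)

theorem mem_oddEdges {u v : V} {p : G.Walk u v} {e : E} :
    e ∈ p.oddEdges ↔ Odd (p.edges.count e) := by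
  simp only [oddEdges, Finset.mem_filter, List.mem_toFinset, and_iff_right_iff_imp]
  exact fun h => List.count_pos_iff.mp h.pos

@[simp] theorem oddEdges_nil (v : V) : (nil v : G.Walk v v).oddEdges = ∅ := rfl

theorem oddEdges_subset_edges {u v : V} (p : G.Walk u v) : p.oddEdges ⊆ p.edges.toFinset :=
  Finset.filter_subset _ _

theorem oddEdges_eq_of_nodup {u v : V} {p : G.Walk u v} (hp : p.edges.Nodup) :
    p.oddEdges = p.edges.toFinset :=
  Finset.filter_true_of_mem fun e he => by
    rw [List.count_eq_one_of_mem hp (List.mem_toFinset.mp he)]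
    exact odd_one

theorem oddEdges_append {u v w : V} (p : G.Walk u v) (q : G.Walk v w) :
    (p.append q).oddEdges = p.oddEdges ∆ q.oddEdges := by
  ext e
  simp only [mem_oddEdges, edges_append, List.count_append, Finset.mem_symmDiff,
    ← Nat.not_even_iff_odd, Nat.even_add]
  tauto

theorem oddEdges_cons {u v w : V} {e : E} (h : G.EndsAt e u v) (p : G.Walk v w) :
    (cons e h p).oddEdges = {e} ∆ p.oddEdges := by
  have hsingle : (cons e h (nil v)).oddEdges = {e} := by simp [oddEdges, edges]
  rw [← hsingle]
  exact oddEdges_append (cons e h (nil v)) p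

end Walk

theorem isSimpleLoop_cons {e : E} {u v : V} (h : G.EndsAt e u v) {q : G.Walk v u}
    (hq : q.verts.Nodup) (he : e ∉ q.edges) : G.IsSimpleLoop (.cons e h q) := by
  refine ⟨Nat.succ_pos _, List.nodup_cons.mpr ⟨he, q.edges_nodup_of_verts_nodup hq⟩, ?_⟩
  obtain ⟨l, hl⟩ := q.exists_verts_eq_append
  rw [hl] at hq
  rw [Walk.verts, hl, ← List.cons_append, List.dropLast_concat]
  exact List.nodup_append_comm.mp hq

section Parity

variable [DecidableEq V]

def boundary (G : Multigraph V E) (z : Finset E) : V → ZMod 2 :=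
  ∑ e ∈ z, (Pi.single (G.src e) 1 + Pi.single (G.tgt e) 1 : V → ZMod 2)

theorem EndsAt.single_add_single {e : E} {u v : V} (h : G.EndsAt e u v) :
    (Pi.single (G.src e) 1 + Pi.single (G.tgt e) 1 : V → ZMod 2) =
      Pi.single u 1 + Pi.single v 1 := by
  rcases h with ⟨rfl, rfl⟩ | ⟨rfl, rfl⟩
  · rfl
  · exact add_comm _ _

theorem boundary_eq_add_boundary_erase [DecidableEq E] {z : Finset E} {e : E} {u v : V}
    (he : e ∈ z) (h : G.EndsAt e u v) :
    G.boundary z = Pi.single u 1 + Pi.single v 1 + G.boundary (z.erase e) := by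
  rw [boundary, boundary, ← Finset.add_sum_erase _ _ he, h.single_add_single]

theorem boundary_symmDiff [DecidableEq E] (z z' : Finset E) :
    G.boundary (z ∆ z') = G.boundary z + G.boundary z' := by
  rw [boundary, boundary, boundary, ← Finset.sum_union_inter, ← Finset.sup_eq_union,
    ← Finset.inf_eq_inter, ← symmDiff_sup_inf z z', Finset.sup_eq_union,
    Finset.sum_union (disjoint_symmDiff_inf z z'), add_assoc, ZModModule.add_self, add_zero]

theorem exists_endsAt_of_boundary_ne_zero {z : Finset E} {u : V} (hu : G.boundary z u ≠ 0) :
    ∃ e ∈ z, ∃ v, G.EndsAt e u v := by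
  rw [boundary, Finset.sum_apply] at hu
  obtain ⟨e, he, hne⟩ := Finset.exists_ne_zero_of_sum_ne_zero hu
  by_cases hs : G.src e = u
  · exact ⟨e, he, G.tgt e, Or.inl ⟨hs, rfl⟩⟩
  · have ht : G.tgt e = u := by
      by_contra ht
      simp [Ne.symm hs, Ne.symm ht] at hne
    exact ⟨e, he, G.src e, Or.inr ⟨rfl, ht⟩⟩

variable [DecidableEq E]

theorem boundary_oddEdges : ∀ {u v : V} (p : G.Walk u v),
    G.boundary p.oddEdges = Pi.single u 1 + Pi.single v 1
  | u, _, .nil _ => by simp [boundary, ZModModule.add_self]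
  | _, _, .cons e h p => by
    rw [Walk.oddEdges_cons, boundary_symmDiff, boundary_oddEdges p, boundary,
      Finset.sum_singleton, h.single_add_single, ZModModule.add_add_add_cancel]

theorem exists_trail_of_boundary_eq {z : Finset E} {u v : V}
    (hz : G.boundary z = Pi.single u 1 + Pi.single v 1) :
    ∃ p : G.Walk u v, p.edges.Nodup ∧ (∀ e ∈ p.edges, e ∈ z) ∧
      G.boundary (z \ p.edges.toFinset) = 0 := by
  induction z using Finset.strongInduction generalizing u with
  | H z ih =>
  by_cases huv : u = v
  · subst huv
    exact ⟨.nil u, List.nodup_nil, by simp [Walk.edges],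
      by simpa [Walk.edges, ZModModule.add_self] using hz⟩
  have hu : G.boundary z u ≠ 0 := by simp [hz, Ne.symm huv]
  obtain ⟨e, he, u', h⟩ := exists_endsAt_of_boundary_ne_zero hu
  have hz' : G.boundary (z.erase e) = Pi.single u' 1 + Pi.single v 1 := by
    rw [boundary_eq_add_boundary_erase he h, add_assoc] at hz
    have := congrArg (Pi.single u' 1 + ·) (add_left_cancel hz)
    simpa [← add_assoc, ZModModule.add_self] using this
  obtain ⟨p, hnd, hpz, hrest⟩ := ih _ (Finset.erase_ssubset he) hz'
  refine ⟨.cons e h p, ?_, ?_, ?_⟩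
  · exact List.nodup_cons.mpr ⟨fun hep => (Finset.mem_erase.mp (hpz e hep)).1 rfl, hnd⟩
  · simp only [Walk.edges, List.mem_cons, forall_eq_or_imp]
    exact ⟨he, fun f hf => Finset.mem_of_mem_erase (hpz f hf)⟩
  · rwa [Walk.edges, List.toFinset_cons, Finset.sdiff_insert, ← Finset.erase_sdiff_comm]

theorem exists_walk_of_boundary_eq_zero {z : Finset E} {e : E} {u v : V}
    (hz : G.boundary z = 0) (he : e ∈ z) (h : G.EndsAt e u v) :
    ∃ p : G.Walk v u, ∀ f ∈ p.edges, f ∈ z.erase e := by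
  rw [boundary_eq_add_boundary_erase he h] at hz
  have hz' : G.boundary (z.erase e) = Pi.single v 1 + Pi.single u 1 := by
    rw [eq_neg_of_add_eq_zero_right hz, ZModModule.neg_eq_self, add_comm]
  obtain ⟨p, -, hp, -⟩ := exists_trail_of_boundary_eq hz'
  exact ⟨p, hp⟩

theorem girth_le_card_of_boundary_eq_zero {z : Finset E} (hne : z.Nonempty)
    (hz : G.boundary z = 0) : G.girth ≤ z.card := by
  obtain ⟨e, he⟩ := hne
  obtain ⟨p, hp⟩ := exists_walk_of_boundary_eq_zero hz he (endsAt_src_tgt e)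
  obtain ⟨q, hq, hqp⟩ := p.exists_verts_nodup
  have hqz : ∀ f ∈ q.edges, f ∈ z.erase e := fun f hf => hp f (hqp hf)
  have hloop := isSimpleLoop_cons (endsAt_src_tgt e) hq fun heq =>
    (Finset.mem_erase.mp (hqz e heq)).1 rfl
  calc G.girth ≤ (Walk.cons e (endsAt_src_tgt e) q).length :=
        Nat.sInf_le ⟨_, _, hloop, rfl⟩
    _ = q.edges.toFinset.card + 1 := by
      rw [List.toFinset_card_of_nodup (q.edges_nodup_of_verts_nodup hq), Walk.length_edges]
      rfl
    _ ≤ (z.erase e).card + 1 := by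
      gcongr
      exact fun f hf => hqz f (List.mem_toFinset.mp hf)
    _ = z.card := Finset.card_erase_add_one he

/-- What a trail leaves of `z` has no boundary, so it is empty below the girth. -/
theorem exists_walk_oddEdges_eq_of_card_lt_girth {z : Finset E} {u v : V}
    (hz : G.boundary z = Pi.single u 1 + Pi.single v 1) (hlt : z.card < G.girth) :
    ∃ p : G.Walk u v, p.oddEdges = z ∧ p.length = z.card := by
  obtain ⟨p, hnd, hpz, hrest⟩ := exists_trail_of_boundary_eq hz
  have hcover : z \ p.edges.toFinset = ∅ := by
    by_contra hne
    have := girth_le_card_of_boundary_eq_zero (Finset.nonempty_iff_ne_empty.mpr hne) hrest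
    have := Finset.card_le_card (Finset.sdiff_subset (s := z) (t := p.edges.toFinset))
    omega
  have hpz' : p.edges.toFinset = z :=
    Finset.Subset.antisymm (fun f hf => hpz f (List.mem_toFinset.mp hf))
      (Finset.sdiff_eq_empty_iff_subset.mp hcover)
  refine ⟨p, (Walk.oddEdges_eq_of_nodup hnd).trans hpz', ?_⟩
  rw [← hpz', List.toFinset_card_of_nodup hnd, Walk.length_edges]

end Parity

def Connects (G : Multigraph V E) (F : Finset E) : Prop :=
  ∀ u v : V, ∃ p : G.Walk u v, ∀ e ∈ p.edges, e ∈ F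

theorem Connects.card_le [Fintype V] {F : Finset E} (hF : G.Connects F) :
    Fintype.card V ≤ F.card + 1 := by
  classical
  cases isEmpty_or_nonempty V
  · simp
  let H : SimpleGraph V := SimpleGraph.fromRel fun u v => ∃ e ∈ F, G.EndsAt e u v
  have hreach : ∀ {u v : V} (p : G.Walk u v), (∀ e ∈ p.edges, e ∈ F) →
      H.Reachable u v := by
    intro u v p hp
    induction p with
    | nil v => exact SimpleGraph.Reachable.refl v
    | @cons u w _ e h p ih =>
      refine .trans ?_ (ih fun f hf => hp f (List.mem_cons_of_mem _ hf))
      by_cases huw : u = w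
      · exact huw ▸ SimpleGraph.Reachable.refl u
      · exact SimpleGraph.Adj.reachable
          ((SimpleGraph.fromRel_adj _ _ _).mpr
            ⟨huw, Or.inl ⟨e, hp e List.mem_cons_self, h⟩⟩)
  have hconn : H.Connected := ⟨fun u v => let ⟨p, hp⟩ := hF u v; hreach p hp⟩
  have hedges : H.edgeSet ⊆ ↑(F.image fun e => s(G.src e, G.tgt e)) := by
    rintro ⟨u, v⟩ huv
    obtain ⟨-, ⟨e, he, h⟩ | ⟨e, he, h⟩⟩ :=
        (SimpleGraph.fromRel_adj _ _ _).mp (H.mem_edgeSet.mp huv) <;>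
      refine Finset.mem_image.mpr ⟨e, he, ?_⟩ <;>
      rcases h with ⟨rfl, rfl⟩ | ⟨rfl, rfl⟩ <;> simp [Sym2.eq_swap]
  calc Fintype.card V = Nat.card V := Nat.card_eq_fintype_card.symm
    _ ≤ H.edgeSet.ncard + 1 := hconn.card_vert_le_card_edgeSet_add_one
    _ ≤ F.card + 1 := by
      gcongr
      exact (Set.ncard_le_ncard hedges (Finset.finite_toSet _)).trans
        ((Set.ncard_coe_finset _).trans_le Finset.card_image_le)

theorem Connects.erase [DecidableEq E] {F : Finset E} {e : E} (hF : G.Connects F)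
    (hdetour : ∀ u v, G.EndsAt e u v → ∃ d : G.Walk u v, ∀ f ∈ d.edges, f ∈ F.erase e) :
    G.Connects (F.erase e) := by
  intro a b
  obtain ⟨p, hp⟩ := hF a b
  induction p with
  | nil v => exact ⟨.nil v, by simp [Walk.edges]⟩
  | cons g h p ih =>
    obtain ⟨q, hq⟩ := ih fun f hf => hp f (List.mem_cons_of_mem _ hf)
    by_cases hge : g = e
    · subst hge
      obtain ⟨d, hd⟩ := hdetour _ _ h
      refine ⟨d.append q, fun f hf => ?_⟩
      rcases List.mem_append.mp (Walk.edges_append d q ▸ hf) with hf | hf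
      exacts [hd f hf, hq f hf]
    · refine ⟨.cons g h q, fun f hf => ?_⟩
      rcases List.mem_cons.mp hf with rfl | hf
      exacts [Finset.mem_erase.mpr ⟨hge, hp f List.mem_cons_self⟩, hq f hf]

/-- An edge `e` of `z` lies on a loop in `z ⊆ T`, so `T.erase e` still connects `G`, with too
few edges. -/
theorem IsSpanningTree.eq_empty_of_boundary_eq_zero [Fintype V] [DecidableEq V]
    [DecidableEq E] {T z : Finset E} (hT : G.IsSpanningTree T) (hzT : z ⊆ T)
    (hz : G.boundary z = 0) : z = ∅ := by
  by_contra hne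
  obtain ⟨e, he⟩ := Finset.nonempty_iff_ne_empty.mpr hne
  have hcon : G.Connects (T.erase e) := Connects.erase hT.1 fun u v h =>
    let ⟨d, hd⟩ := exists_walk_of_boundary_eq_zero hz he h.symm
    ⟨d, fun f hf => Finset.erase_subset_erase e hzT (hd f hf)⟩
  have hcard := hcon.card_le
  rw [Finset.card_erase_add_one (hzT he)] at hcard
  have := hT.2
  omega

section Cover

variable [Fintype E] [DecidableEq E] {T : Finset E}

theorem symmDiff_subset_compl (τ σ : {τ : Finset E // τ ⊆ Tᶜ}) : τ.1 ∆ σ.1 ⊆ Tᶜ :=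
  symmDiff_le_sup.trans (Finset.union_subset τ.2 σ.2)

theorem tauStep_val (e : E) (τ : {τ : Finset E // τ ⊆ Tᶜ}) :
    (tauStep T e τ).1 = τ.1 ∆ (Tᶜ ∩ {e}) := by
  unfold tauStep
  split_ifs with he
  · rw [Finset.inter_singleton_of_mem he]
  · rw [Finset.inter_singleton_of_notMem he]
    exact (symmDiff_bot _).symm

theorem tauStep_tauStep (e : E) (τ : {τ : Finset E // τ ⊆ Tᶜ}) :
    tauStep T e (tauStep T e τ) = τ :=
  Subtype.ext <| by rw [tauStep_val, tauStep_val, symmDiff_symmDiff_cancel_right]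

def monodromy (T : Finset E) : ∀ {u v : V}, G.Walk u v →
    {τ : Finset E // τ ⊆ Tᶜ} → {τ : Finset E // τ ⊆ Tᶜ}
  | _, _, .nil _, τ => τ
  | _, _, .cons e _ p, τ => monodromy T p (tauStep T e τ)

theorem monodromy_val : ∀ {u v : V} (p : G.Walk u v) (τ : {τ : Finset E // τ ⊆ Tᶜ}),
    (monodromy T p τ).1 = τ.1 ∆ (Tᶜ ∩ p.oddEdges)
  | _, _, .nil _, τ => by
    rw [monodromy, Walk.oddEdges_nil, Finset.inter_empty]
    exact (symmDiff_bot _).symm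
  | _, _, .cons e h p, τ => by
    rw [monodromy, monodromy_val p, tauStep_val, Walk.oddEdges_cons, symmDiff_assoc,
      Finset.inter_symmDiff_distrib_left]

theorem admissible_iff_inter_oddEdges {x y : V × {τ : Finset E // τ ⊆ Tᶜ}}
    (p : G.Walk x.1 y.1) : G.Admissible T x y p ↔ Tᶜ ∩ p.oddEdges = x.2.1 ∆ y.2.1 := by
  simp only [Admissible, Finset.ext_iff, Finset.mem_inter, Walk.mem_oddEdges, Nat.odd_iff]
  refine ⟨fun h e => ?_, fun h e he => ?_⟩
  · by_cases he : e ∈ Tᶜ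
    · have := h e he
      split_ifs at this with hxy <;> simp [he, hxy, this]
    · exact iff_of_false (fun h' => he h'.1) fun hxy => he (symmDiff_subset_compl x.2 y.2 hxy)
  · have := h e
    split_ifs with hxy <;> simp_all

theorem admissible_iff_monodromy {x y : V × {τ : Finset E // τ ⊆ Tᶜ}} (p : G.Walk x.1 y.1) :
    G.Admissible T x y p ↔ monodromy T p x.2 = y.2 := by
  rw [admissible_iff_inter_oddEdges, Subtype.ext_iff, monodromy_val]
  constructor
  · intro h
    rw [h, symmDiff_symmDiff_cancel_left]
  · intro h
    rw [← h, symmDiff_symmDiff_cancel_left]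

theorem endsAt_of_cover_endsAt {f : E × {τ : Finset E // τ ⊆ Tᶜ}}
    {x x' : V × {τ : Finset E // τ ⊆ Tᶜ}} (h : (cover G T).EndsAt f x x') :
    G.EndsAt f.1 x.1 x'.1 ∧ x'.2 = tauStep T f.1 x.2 := by
  rcases h with ⟨rfl, rfl⟩ | ⟨rfl, rfl⟩
  · exact ⟨Or.inl ⟨rfl, rfl⟩, rfl⟩
  · exact ⟨Or.inr ⟨rfl, rfl⟩, (tauStep_tauStep _ _).symm⟩

theorem length_projWalk : ∀ {x y : V × {τ : Finset E // τ ⊆ Tᶜ}}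
    (q : (cover G T).Walk x y), (projWalk q).length = q.length
  | _, _, .nil _ => rfl
  | _, _, .cons _ _ q => congrArg (· + 1) (length_projWalk q)

theorem edges_projWalk : ∀ {x y : V × {τ : Finset E // τ ⊆ Tᶜ}}
    (q : (cover G T).Walk x y), (projWalk q).edges = q.edges.map Prod.fst
  | _, _, .nil _ => rfl
  | _, _, .cons f _ q => congrArg (f.1 :: ·) (edges_projWalk q)

theorem monodromy_projWalk : ∀ {x y : V × {τ : Finset E // τ ⊆ Tᶜ}}
    (q : (cover G T).Walk x y), monodromy T (projWalk q) x.2 = y.2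
  | _, _, .nil _ => rfl
  | _, _, .cons _ h q => by
    rw [projWalk, monodromy, ← (endsAt_of_cover_endsAt h).2, monodromy_projWalk q]

theorem admissible_projWalk {x y : V × {τ : Finset E // τ ⊆ Tᶜ}} (q : (cover G T).Walk x y) :
    G.Admissible T x y (projWalk q) :=
  (admissible_iff_monodromy _).mpr (monodromy_projWalk q)

/-- Crossing `e` backwards from sheet `τ` uses the cover edge `(e, tauStep T e τ)`, as
`tauStep T e` is an involution. -/
def liftWalk [DecidableEq V] : ∀ {u v : V} (p : G.Walk u v) (τ : {τ : Finset E // τ ⊆ Tᶜ}),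
    (cover G T).Walk (u, τ) (v, monodromy T p τ)
  | _, _, .nil w, τ => .nil (w, τ)
  | u, _, .cons (v := m) e h p, τ =>
    .cons (e, if G.src e = u ∧ G.tgt e = m then τ else tauStep T e τ)
      (by
        split_ifs with hc
        · exact Or.inl ⟨Prod.ext hc.1 rfl, Prod.ext hc.2 rfl⟩
        · have h' := h.resolve_left hc
          exact Or.inr ⟨Prod.ext h'.1 rfl, Prod.ext h'.2 (tauStep_tauStep e τ)⟩)
      (liftWalk p (tauStep T e τ))

theorem length_liftWalk [DecidableEq V] : ∀ {u v : V} (p : G.Walk u v)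
    (τ : {τ : Finset E // τ ⊆ Tᶜ}), (liftWalk (T := T) p τ).length = p.length
  | _, _, .nil _, _ => rfl
  | _, _, .cons e _ p, τ => congrArg (· + 1) (length_liftWalk p (tauStep T e τ))

theorem edges_liftWalk [DecidableEq V] : ∀ {u v : V} (p : G.Walk u v)
    (τ : {τ : Finset E // τ ⊆ Tᶜ}), (liftWalk (T := T) p τ).edges.map Prod.fst = p.edges
  | _, _, .nil _, _ => rfl
  | _, _, .cons e _ p, τ => congrArg (e :: ·) (edges_liftWalk p (tauStep T e τ))

theorem exists_lift [DecidableEq V] {u v : V} {τ σ : {τ : Finset E // τ ⊆ Tᶜ}}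
    (p : G.Walk u v) (hp : monodromy T p τ = σ) :
    ∃ q : (cover G T).Walk (u, τ) (v, σ),
      q.length = p.length ∧ q.edges.map Prod.fst = p.edges := by
  subst hp
  exact ⟨liftWalk p τ, length_liftWalk p τ, edges_liftWalk p τ⟩

theorem inter_oddEdges_eq_empty {u v : V} {p : G.Walk u v} (hp : ∀ e ∈ p.edges, e ∈ T) :
    Tᶜ ∩ p.oddEdges = ∅ :=
  Finset.eq_empty_of_forall_notMem fun e he =>
    Finset.mem_compl.mp (Finset.mem_inter.mp he).1
      (hp e (List.mem_toFinset.mp (p.oddEdges_subset_edges (Finset.mem_inter.mp he).2)))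

/-- Append to a tree path, for each edge `e` of `δ`, a loop running through `T` to `e`, across
`e` and back. -/
theorem Connects.exists_walk_inter_oddEdges_eq (hT : G.Connects T) (u v : V) {δ : Finset E}
    (hδ : δ ⊆ Tᶜ) : ∃ p : G.Walk u v, Tᶜ ∩ p.oddEdges = δ := by
  induction δ using Finset.induction_on with
  | empty =>
    obtain ⟨p, hp⟩ := hT u v
    exact ⟨p, inter_oddEdges_eq_empty hp⟩
  | insert e δ he ih =>
    obtain ⟨p, hp⟩ := ih ((Finset.subset_insert e δ).trans hδ)
    obtain ⟨t₁, ht₁⟩ := hT u (G.src e)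
    obtain ⟨t₂, ht₂⟩ := hT (G.tgt e) u
    refine ⟨t₁.append (.cons e (endsAt_src_tgt e) (t₂.append p)), ?_⟩
    rw [Walk.oddEdges_append, Walk.oddEdges_cons, Walk.oddEdges_append,
      Finset.inter_symmDiff_distrib_left, Finset.inter_symmDiff_distrib_left,
      Finset.inter_symmDiff_distrib_left, inter_oddEdges_eq_empty ht₁,
      inter_oddEdges_eq_empty ht₂, hp, Finset.inter_singleton_of_mem (hδ (δ.mem_insert_self e)),
      ← Finset.bot_eq_empty, bot_symmDiff, bot_symmDiff, Finset.insert_eq]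
    exact (Finset.disjoint_singleton_left.mpr he).symmDiff_eq_sup

theorem Connects.exists_admissible (hT : G.Connects T) (x y : V × {τ : Finset E // τ ⊆ Tᶜ}) :
    ∃ p : G.Walk x.1 y.1, G.Admissible T x y p :=
  let ⟨p, hp⟩ := hT.exists_walk_inter_oddEdges_eq x.1 y.1 (symmDiff_subset_compl x.2 y.2)
  ⟨p, (admissible_iff_inter_oddEdges p).mpr hp⟩

theorem IsSpanningTree.oddEdges_eq_of_admissible [Fintype V] [DecidableEq V]
    (hT : G.IsSpanningTree T) {x y : V × {τ : Finset E // τ ⊆ Tᶜ}} {p q : G.Walk x.1 y.1}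
    (hp : G.Admissible T x y p) (hq : G.Admissible T x y q) : p.oddEdges = q.oddEdges := by
  rw [admissible_iff_inter_oddEdges] at hp hq
  have hz : G.boundary (p.oddEdges ∆ q.oddEdges) = 0 := by
    rw [boundary_symmDiff, boundary_oddEdges, boundary_oddEdges, ZModModule.add_self]
  have hzT : p.oddEdges ∆ q.oddEdges ⊆ T := fun e he => by
    by_contra heT
    have : e ∈ Tᶜ ∩ (p.oddEdges ∆ q.oddEdges) :=
      Finset.mem_inter.mpr ⟨Finset.mem_compl.mpr heT, he⟩
    rw [Finset.inter_symmDiff_distrib_left, hp, hq, symmDiff_self] at this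
    exact Finset.notMem_empty e this
  exact symmDiff_eq_bot.mp (hT.eq_empty_of_boundary_eq_zero hzT hz)

variable [DecidableEq V]

theorem graphDist_le_of_admissible {x y : V × {τ : Finset E // τ ⊆ Tᶜ}} {p : G.Walk x.1 y.1}
    (hp : G.Admissible T x y p) : graphDist (cover G T) x y ≤ p.length :=
  let ⟨q, hq, _⟩ := exists_lift p ((admissible_iff_monodromy p).mp hp)
  Nat.sInf_le ⟨q, hq⟩

theorem Connects.exists_admissible_length_eq_graphDist (hT : G.Connects T)
    (x y : V × {τ : Finset E // τ ⊆ Tᶜ}) :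
    ∃ p : G.Walk x.1 y.1, G.Admissible T x y p ∧ p.length = graphDist (cover G T) x y := by
  obtain ⟨p, hp⟩ := hT.exists_admissible x y
  obtain ⟨q, hq⟩ := Nat.sInf_mem (s := {n | ∃ q : (cover G T).Walk x y, q.length = n})
    (let ⟨q, hq, _⟩ := exists_lift p ((admissible_iff_monodromy p).mp hp); ⟨_, q, hq⟩)
  exact ⟨projWalk q, admissible_projWalk q, (length_projWalk q).trans hq⟩

theorem separates_cover_iff {x y : V × {τ : Finset E // τ ⊆ Tᶜ}} {e : E} :
    (cover G T).Separates (wallOf G T e) x y ↔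
      ∀ p : G.Walk x.1 y.1, G.Admissible T x y p → e ∈ p.edges := by
  refine ⟨fun hsep p hp => ?_, fun hall ⟨q, hq⟩ => ?_⟩
  · by_contra he
    obtain ⟨q, -, hqp⟩ := exists_lift p ((admissible_iff_monodromy p).mp hp)
    refine hsep ⟨q, fun f hf hfe => he ?_⟩
    rw [← hqp, ← (hfe : f.1 = e)]
    exact List.mem_map_of_mem hf
  · obtain ⟨f, hf, rfl⟩ :=
      List.mem_map.mp (edges_projWalk q ▸ hall _ (admissible_projWalk q))
    exact hq f hf rfl

theorem wallDist_le_graphDist (hT : G.Connects T) (x y : V × {τ : Finset E // τ ⊆ Tᶜ}) :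
    wallDist G T x y ≤ graphDist (cover G T) x y := by
  obtain ⟨p, hp, hlen⟩ := hT.exists_admissible_length_eq_graphDist x y
  have hsub : {e | (cover G T).Separates (wallOf G T e) x y} ⊆ ↑p.edges.toFinset :=
    fun e he => List.mem_toFinset.mpr (separates_cover_iff.mp he p hp)
  calc wallDist G T x y ≤ p.edges.toFinset.card :=
        (Set.ncard_le_ncard hsub (Finset.finite_toSet _)).trans_eq (Set.ncard_coe_finset _)
    _ ≤ p.edges.length := List.toFinset_card_le _
    _ = graphDist (cover G T) x y := by rw [Walk.length_edges, hlen]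

/-- All admissible walks traverse the edges of `D = p₀.oddEdges` an odd number of times, so the
walls of `D` separate `x` from `y`; below the girth, `D` is the edge set of an admissible trail. -/
theorem graphDist_le_wallDist_of_lt_girth [Fintype V] (hT : G.IsSpanningTree T)
    (x y : V × {τ : Finset E // τ ⊆ Tᶜ}) (h : wallDist G T x y < G.girth) :
    graphDist (cover G T) x y ≤ wallDist G T x y := by
  obtain ⟨p₀, hp₀⟩ := Connects.exists_admissible hT.1 x y
  have hD : (p₀.oddEdges : Set E) ⊆ {e | (cover G T).Separates (wallOf G T e) x y} :=
    fun e he => separates_cover_iff.mpr fun p hp => List.mem_toFinset.mp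
      (p.oddEdges_subset_edges (hT.oddEdges_eq_of_admissible hp hp₀ ▸ he))
  have hDcard : p₀.oddEdges.card ≤ wallDist G T x y :=
    (Set.ncard_coe_finset _).symm.trans_le (Set.ncard_le_ncard hD (Set.toFinite _))
  obtain ⟨p, hp, hlen⟩ :=
    exists_walk_oddEdges_eq_of_card_lt_girth (boundary_oddEdges p₀) (hDcard.trans_lt h)
  have hadm : G.Admissible T x y p := by
    rw [admissible_iff_inter_oddEdges, hp]
    exact (admissible_iff_inter_oddEdges p₀).mp hp₀
  exact (graphDist_le_of_admissible hadm).trans (hlen.trans_le hDcard)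

end Cover

end Multigraph

open Multigraph in
theorem wallDist_eq_graphDist_below_girth_general {V E : Type} [Fintype V] [Fintype E]
    [DecidableEq V] [DecidableEq E] (G : Multigraph V E)
    (T : Finset E) (hT : G.IsSpanningTree T)
    (x y : V × {τ : Finset E // τ ⊆ Tᶜ}) :
    (wallDist G T x y < G.girth ↔ graphDist (cover G T) x y < G.girth) ∧
    (wallDist G T x y < G.girth → wallDist G T x y = graphDist (cover G T) x y) := by
  have hle := wallDist_le_graphDist hT.1 x y
  have hge := graphDist_le_wallDist_of_lt_girth hT x y
  exact ⟨⟨fun h => (hge h).trans_lt h, hle.trans_lt⟩, fun h => hle.antisymm (hge h)⟩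

open Multigraph in
/-- For a `ℤ/2`-pair `(G̃, G)` and vertices `x`, `y` of `G̃`:
`d_W(x,y) < girth G` if and only if `d_{G̃}(x,y) < girth G`, and if these inequalities
hold then `d_W(x,y) = d_{G̃}(x,y)`. -/
theorem wallDist_eq_graphDist_below_girth {V E : Type} [Fintype V] [Fintype E]
    [DecidableEq V] [DecidableEq E] (G : Multigraph V E)
    (hG : G.TwoConnected) (T : Finset E) (hT : G.IsSpanningTree T)
    (x y : V × {τ : Finset E // τ ⊆ Tᶜ}) :
    (wallDist G T x y < G.girth ↔ graphDist (cover G T) x y < G.girth) ∧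
    (wallDist G T x y < G.girth → wallDist G T x y = graphDist (cover G T) x y) :=
  wallDist_eq_graphDist_below_girth_general G T hT x y
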